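/- arXiv:2403.15099 — 7 statements merged into one kernel-verified Lean document; each statement's English description precedes it below -/
import Mathlib

section
/- Let 0 < γ < 1 and 0 < π01, π11 < 1. The 3×4 matrix with rows c0 = [(1-γ)(1-π00), γ(1-π11), (1-γ)π00, γπ11], c1 = [π10-1, 1-π11, -π10, π11], c2 = [1-π00, π01-1, π00, -π01] has rank 3 if (1-γ)π01 + γπ11 < 1 (assuming π00 ≠ π10 and π01 ≠ π11). -/
theorem Matrix.rank_eq_card_height_of_det_submatrix_ne_zero {m n R : Type*} [Fintype m]
    [DecidableEq m] [Fintype n] [CommRing R] [IsDomain R] (A : Matrix m n R) (c : m → n)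
    (h : (A.submatrix id c).det ≠ 0) : A.rank = Fintype.card m :=
  le_antisymm A.rank_le_card_height <|
    (rank_of_det_ne_zero h).symm.le.trans (A.rank_submatrix_le id c)

theorem stmt_0_general (γ π00 π01 π10 π11 : ℝ)
    (hne0 : π00 ≠ π10)
    (hs1 : (1 - γ) * π01 + γ * π11 < 1) :
    (Matrix.of ![![(1 - γ) * (1 - π00), γ * (1 - π11), (1 - γ) * π00, γ * π11],
       ![π10 - 1, 1 - π11, -π10, π11],
       ![1 - π00, π01 - 1, π00, -π01]] : Matrix (Fin 3) (Fin 4) ℝ).rank = 3 := by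
  refine (Matrix.rank_eq_card_height_of_det_submatrix_ne_zero _ Fin.castSucc ?_).trans
    (Fintype.card_fin 3)
  convert mul_ne_zero (sub_ne_zero.mpr hne0) (sub_ne_zero.mpr hs1.ne') using 1
  simp only [Matrix.det_fin_three, Matrix.submatrix_apply, id_eq, Fin.castSucc_zero,
    Fin.castSucc_one, Fin.reduceCastSucc, Matrix.of_apply, Matrix.cons_val', Matrix.cons_val_zero,
    Matrix.cons_val_one, Matrix.cons_val, Matrix.cons_val_fin_one]
  ring

theorem stmt_0 (γ π00 π01 π10 π11 : ℝ)
    (hγ : 0 < γ) (hγ1 : γ < 1)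
    (h01 : 0 < π01) (h011 : π01 < 1)
    (h11 : 0 < π11) (h111 : π11 < 1)
    (hne0 : π00 ≠ π10) (hne1 : π01 ≠ π11)
    (hs1 : (1 - γ) * π01 + γ * π11 < 1) :
    (Matrix.of ![![(1 - γ) * (1 - π00), γ * (1 - π11), (1 - γ) * π00, γ * π11],
       ![π10 - 1, 1 - π11, -π10, π11],
       ![1 - π00, π01 - 1, π00, -π01]] : Matrix (Fin 3) (Fin 4) ℝ).rank = 3 :=
  stmt_0_general γ π00 π01 π10 π11 hne0 hs1
end

section
/- Let γ, π00, π01, π10, π11 ∈ (0,1) with π00 < π10, π01 < π11, and set s0 = (1-γ)π00 + γπ10, s1 = (1-γ)π01 + γπ11, and assume s1 < 1. Define p00, p01, p10 as functions of p11 by: p01(p11) = (-p11·s1 - γ + 1)/(1 - s1), p00(p11) = [-p11(π11-π01)s0 + γ(π00π01 - 2π00π11 + π00 + π10π11 - π10) + π00(π11-π01)]/[(π10-π00)(1-s1)], p10(p11) = [p11(π11-π01)(1-s0) + γ(π00π01 - 2π00π11 + π00 - π01 + π10π11 - π10 + π11) - (1-π00)(π11-π01)]/[(π10-π00)(1-s1)].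 Then ∂p00/∂p11 < 0, ∂p01/∂p11 < 0, and ∂p10/∂p11 > 0. -/
/-! Each of `p00`, `p01`, `p10` is affine in `p11`, so its derivative is its slope. The signs of
the slopes follow from `π10 - π00 > 0`, `π11 - π01 > 0` and `0 < s0, s1 < 1`, the latter because
`s0` and `s1` are strict convex combinations of numbers in `(0, 1)`. -/

lemma one_sub_mul_add_mul_mem_Ioo {a b γ : ℝ} (hγ : 0 < γ) (hγ1 : γ < 1) (hab : a < b) :
    (1 - γ) * a + γ * b ∈ Set.Ioo a b :=
  openSegment_eq_Ioo hab ▸ ⟨1 - γ, γ, sub_pos.2 hγ1, hγ, sub_add_cancel 1 γ, rfl⟩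

theorem stmt_1_general (γ π00 π01 π10 π11 : ℝ)
    (hγ : 0 < γ) (hγ1 : γ < 1)
    (h00 : 0 < π00)
    (h01 : 0 < π01)
    (h101 : π10 < 1)
    (hlt0 : π00 < π10) (hlt1 : π01 < π11)
    (s0 s1 : ℝ)
    (hs0 : s0 = (1 - γ) * π00 + γ * π10)
    (hs1 : s1 = (1 - γ) * π01 + γ * π11)
    (hs1lt : s1 < 1) :
    (∀ x : ℝ, deriv (fun p11 : ℝ =>
      (-p11 * (π11 - π01) * s0 + γ * (π00 * π01 - 2 * π00 * π11 + π00 + π10 * π11 - π10)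
        + π00 * (π11 - π01)) / ((π10 - π00) * (1 - s1))) x < 0) ∧
    (∀ x : ℝ, deriv (fun p11 : ℝ => (-p11 * s1 - γ + 1) / (1 - s1)) x < 0) ∧
    (∀ x : ℝ, deriv (fun p11 : ℝ =>
      (p11 * (π11 - π01) * (1 - s0) + γ * (π00 * π01 - 2 * π00 * π11 + π00 - π01
        + π10 * π11 - π10 + π11) - (1 - π00) * (π11 - π01)) / ((π10 - π00) * (1 - s1))) x > 0) := by
  obtain ⟨hπ00_lt_s0, hs0_lt_π10⟩ := hs0 ▸ one_sub_mul_add_mul_mem_Ioo hγ hγ1 hlt0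
  obtain ⟨hπ01_lt_s1, -⟩ := hs1 ▸ one_sub_mul_add_mul_mem_Ioo hγ hγ1 hlt1
  have hΔ0 : 0 < π10 - π00 := sub_pos.2 hlt0
  have hΔ1 : 0 < π11 - π01 := sub_pos.2 hlt1
  have hs1' : 0 < 1 - s1 := sub_pos.2 hs1lt
  have hden : 0 < (π10 - π00) * (1 - s1) := mul_pos hΔ0 hs1'
  refine ⟨fun x => ?_, fun x => ?_, fun x => ?_⟩
  · simpa using div_neg_of_neg_of_pos (neg_neg_of_pos (mul_pos hΔ1 (h00.trans hπ00_lt_s0))) hden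
  · simpa using div_neg_of_neg_of_pos (neg_neg_of_pos (h01.trans hπ01_lt_s1)) hs1'
  · simpa using div_pos (mul_pos hΔ1 (sub_pos.2 (hs0_lt_π10.trans h101))) hden

theorem stmt_1 (γ π00 π01 π10 π11 : ℝ)
    (hγ : 0 < γ) (hγ1 : γ < 1)
    (h00 : 0 < π00) (h001 : π00 < 1)
    (h01 : 0 < π01) (h011 : π01 < 1)
    (h10 : 0 < π10) (h101 : π10 < 1)
    (h11 : 0 < π11) (h111 : π11 < 1)
    (hlt0 : π00 < π10) (hlt1 : π01 < π11)
    (s0 s1 : ℝ)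
    (hs0 : s0 = (1 - γ) * π00 + γ * π10)
    (hs1 : s1 = (1 - γ) * π01 + γ * π11)
    (hs1lt : s1 < 1) :
    (∀ x : ℝ, deriv (fun p11 : ℝ =>
      (-p11 * (π11 - π01) * s0 + γ * (π00 * π01 - 2 * π00 * π11 + π00 + π10 * π11 - π10)
        + π00 * (π11 - π01)) / ((π10 - π00) * (1 - s1))) x < 0) ∧
    (∀ x : ℝ, deriv (fun p11 : ℝ => (-p11 * s1 - γ + 1) / (1 - s1)) x < 0) ∧
    (∀ x : ℝ, deriv (fun p11 : ℝ =>
      (p11 * (π11 - π01) * (1 - s0) + γ * (π00 * π01 - 2 * π00 * π11 + π00 - π01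
        + π10 * π11 - π10 + π11) - (1 - π00) * (π11 - π01)) / ((π10 - π00) * (1 - s1))) x > 0) :=
  stmt_1_general γ π00 π01 π10 π11 hγ hγ1 h00 h01 h101 hlt0 hlt1 s0 s1 hs0 hs1 hs1lt
end

section
/- Let γ, π00, π01, π10, π11 ∈ (0,1) with π00 ≤ π10 ≤ π11, π00 ≤ π01 ≤ π11, and π01·π10 ≠ π00·π11. Consider the linear program: minimize (1-γ)(1-π00)p00 + γ(1-π11)p01 + (1-γ)π00·p10 + γπ11·p11 subject to (π10-1)p00 + (1-π11)p01 - π10·p10 + π11·p11 ≥ 1, (1-π00)p00 + (π01-1)p01 + π00·p10 - π01·p11 ≥ -1, and p00, p01, p10, p11 ≥ 0. Then the optimal value equals γ. -/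
/-!
Paying only the good responders, `p01 = p11 = 1`, satisfies both incentive constraints and
costs exactly `γ`. Conversely `γ` is a dual certificate for the first constraint alone: the
expected payment minus `γ` times its left-hand side is a nonnegative combination of `p00`
and `p10`, so every feasible payment costs at least `γ`.
-/

theorem le_expectedPayment_of_goodResponder_incentive {γ π00 π10 π11 p00 p01 p10 p11 : ℝ}
    (hγ : 0 ≤ γ) (hγ1 : γ ≤ 1) (h00 : 0 ≤ π00) (h001 : π00 ≤ 1)
    (h10 : 0 ≤ π10) (h101 : π10 ≤ 1) (hp00 : 0 ≤ p00) (hp10 : 0 ≤ p10)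
    (hinc : (π10 - 1) * p00 + (1 - π11) * p01 - π10 * p10 + π11 * p11 ≥ 1) :
    γ ≤ (1 - γ) * (1 - π00) * p00 + γ * (1 - π11) * p01
      + (1 - γ) * π00 * p10 + γ * π11 * p11 := by
  have hslack : (1 - γ) * (1 - π00) * p00 + γ * (1 - π11) * p01
      + (1 - γ) * π00 * p10 + γ * π11 * p11
      - γ * ((π10 - 1) * p00 + (1 - π11) * p01 - π10 * p10 + π11 * p11)
      = ((1 - γ) * (1 - π00) + γ * (1 - π10)) * p00 + ((1 - γ) * π00 + γ * π10) * p10 := by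
    ring
  have hcoeff00 : 0 ≤ (1 - γ) * (1 - π00) + γ * (1 - π10) := by
    have := sub_nonneg.2 hγ1; have := sub_nonneg.2 h001; have := sub_nonneg.2 h101; positivity
  have hcoeff10 : 0 ≤ (1 - γ) * π00 + γ * π10 := by
    have := sub_nonneg.2 hγ1; positivity
  linarith [mul_nonneg hcoeff00 hp00, mul_nonneg hcoeff10 hp10, mul_le_mul_of_nonneg_left hinc hγ]

theorem stmt_3_general (γ π00 π01 π10 π11 : ℝ)
    (hγ : 0 < γ) (hγ1 : γ < 1)
    (h00 : 0 < π00) (h001 : π00 < 1)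
    (h10 : 0 < π10) (h101 : π10 < 1) :
    IsLeast { v : ℝ | ∃ p00 p01 p10 p11 : ℝ,
      0 ≤ p00 ∧ 0 ≤ p01 ∧ 0 ≤ p10 ∧ 0 ≤ p11 ∧
      (π10 - 1) * p00 + (1 - π11) * p01 - π10 * p10 + π11 * p11 ≥ 1 ∧
      (1 - π00) * p00 + (π01 - 1) * p01 + π00 * p10 - π01 * p11 ≥ -1 ∧
      v = (1 - γ) * (1 - π00) * p00 + γ * (1 - π11) * p01
            + (1 - γ) * π00 * p10 + γ * π11 * p11 } γ := by
  refine ⟨⟨0, 1, 0, 1, le_rfl, zero_le_one, le_rfl, zero_le_one, by linarith, by linarith,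
    by ring⟩, ?_⟩
  rintro v ⟨p00, p01, p10, p11, hp00, -, hp10, -, hinc, -, rfl⟩
  exact le_expectedPayment_of_goodResponder_incentive hγ.le hγ1.le h00.le h001.le h10.le h101.le
    hp00 hp10 hinc

theorem stmt_3 (γ π00 π01 π10 π11 : ℝ)
    (hγ : 0 < γ) (hγ1 : γ < 1)
    (h00 : 0 < π00) (h001 : π00 < 1)
    (h01 : 0 < π01) (h011 : π01 < 1)
    (h10 : 0 < π10) (h101 : π10 < 1)
    (h11 : 0 < π11) (h111 : π11 < 1)
    (ha1 : π00 ≤ π10) (ha2 : π10 ≤ π11) (ha3 : π00 ≤ π01) (ha4 : π01 ≤ π11)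
    (hne : π01 * π10 ≠ π00 * π11) :
    IsLeast { v : ℝ | ∃ p00 p01 p10 p11 : ℝ,
      0 ≤ p00 ∧ 0 ≤ p01 ∧ 0 ≤ p10 ∧ 0 ≤ p11 ∧
      (π10 - 1) * p00 + (1 - π11) * p01 - π10 * p10 + π11 * p11 ≥ 1 ∧
      (1 - π00) * p00 + (π01 - 1) * p01 + π00 * p10 - π01 * p11 ≥ -1 ∧
      v = (1 - γ) * (1 - π00) * p00 + γ * (1 - π11) * p01
            + (1 - γ) * π00 * p10 + γ * π11 * p11 } γ :=
  stmt_3_general γ π00 π01 π10 π11 hγ hγ1 h00 h001 h10 h101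
end

section
/- Let γ, π00, π01, π10, π11 ∈ (0,1) with π01 ≤ π11. For every t ∈ [0,1], the point (p00, p01, p10, p11) = (0, t, 0, 1/π11 - t(1-π11)/π11) is feasible for the non-negative payment LP (i.e., satisfies both incentive constraints and non-negativity) and achieves objective value γ. -/
/-!
The point pays `t` on (bad responder, survival) and tops up the payment `p₁₁` on
(good responder, survival) so that `π₁₁ p₁₁ = 1 - t (1 - π₁₁)`. Then the first incentive
constraint and the objective hold with equality, while the slack of the second constraint,
multiplied by `π₁₁`, is `(π₁₁ - π₀₁)(1 - t) ≥ 0`.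
-/

section PaymentLP

variable {π t : ℝ}

theorem mul_one_div_sub_mul_div (hπ : π ≠ 0) :
    π * (1 / π - t * (1 - π) / π) = 1 - t * (1 - π) := by
  field_simp

theorem one_div_sub_mul_div_nonneg (hπ : 0 < π) (ht0 : 0 ≤ t) (ht1 : t ≤ 1) :
    0 ≤ 1 / π - t * (1 - π) / π := by
  rw [← sub_div]
  have : t * (1 - π) ≤ 1 := by nlinarith
  exact div_nonneg (by linarith) hπ.le

theorem neg_one_le_of_mul_eq {π' p : ℝ} (hπ : 0 < π) (hp : π * p = 1 - t * (1 - π))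
    (hle : π' ≤ π) (ht1 : t ≤ 1) :
    -1 ≤ (π' - 1) * t - π' * p := by
  have slack : π * ((π' - 1) * t - π' * p + 1) = (π - π') * (1 - t) := by
    linear_combination (-π') * hp
  have : 0 ≤ (π' - 1) * t - π' * p + 1 :=
    nonneg_of_mul_nonneg_right (slack ▸ mul_nonneg (by linarith) (by linarith)) hπ
  linarith

end PaymentLP

theorem stmt_4_general (γ π00 π01 π10 π11 : ℝ)
    (h11 : 0 < π11)
    (hle : π01 ≤ π11)
    (t : ℝ) (ht0 : 0 ≤ t) (ht1 : t ≤ 1) :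
    let p00 : ℝ := 0
    let p01 : ℝ := t
    let p10 : ℝ := 0
    let p11 : ℝ := 1 / π11 - t * (1 - π11) / π11
    (0 ≤ p00 ∧ 0 ≤ p01 ∧ 0 ≤ p10 ∧ 0 ≤ p11) ∧
    (π10 - 1) * p00 + (1 - π11) * p01 - π10 * p10 + π11 * p11 ≥ 1 ∧
    (1 - π00) * p00 + (π01 - 1) * p01 + π00 * p10 - π01 * p11 ≥ -1 ∧
    (1 - γ) * (1 - π00) * p00 + γ * (1 - π11) * p01
      + (1 - γ) * π00 * p10 + γ * π11 * p11 = γ := by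
  dsimp only
  set p11 := 1 / π11 - t * (1 - π11) / π11
  have hp11 : π11 * p11 = 1 - t * (1 - π11) := mul_one_div_sub_mul_div h11.ne'
  refine ⟨⟨le_rfl, ht0, le_rfl, one_div_sub_mul_div_nonneg h11 ht0 ht1⟩, ?_, ?_, ?_⟩
  · linarith
  · linarith [neg_one_le_of_mul_eq h11 hp11 hle ht1]
  · linear_combination γ * hp11

theorem stmt_4 (γ π00 π01 π10 π11 : ℝ)
    (hγ : 0 < γ) (hγ1 : γ < 1)
    (h00 : 0 < π00) (h001 : π00 < 1)
    (h01 : 0 < π01) (h011 : π01 < 1)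
    (h10 : 0 < π10) (h101 : π10 < 1)
    (h11 : 0 < π11) (h111 : π11 < 1)
    (hle : π01 ≤ π11)
    (t : ℝ) (ht0 : 0 ≤ t) (ht1 : t ≤ 1) :
    let p00 : ℝ := 0
    let p01 : ℝ := t
    let p10 : ℝ := 0
    let p11 : ℝ := 1 / π11 - t * (1 - π11) / π11
    (0 ≤ p00 ∧ 0 ≤ p01 ∧ 0 ≤ p10 ∧ 0 ≤ p11) ∧
    (π10 - 1) * p00 + (1 - π11) * p01 - π10 * p10 + π11 * p11 ≥ 1 ∧
    (1 - π00) * p00 + (π01 - 1) * p01 + π00 * p10 - π01 * p11 ≥ -1 ∧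
    (1 - γ) * (1 - π00) * p00 + γ * (1 - π11) * p01
      + (1 - γ) * π00 * p10 + γ * π11 * p11 = γ :=
  stmt_4_general γ π00 π01 π10 π11 h11 hle t ht0 ht1
end

section
/- Let γ, w0, w1, π01, π11 ∈ (0,1) with π01 ≤ π11. Define m* = γ and m_w* = γ(1 - π01·w1/π11 - w0) + π01·w1/π11. Then m* < m_w* if and only if π01·w1/(π11·w0 + π01·w1) > γ. -/
/-! Writing `r = π01 w1 / π11`, the gap `m_w* - m* = r (1 - γ) - γ w0` is positive exactly when
`γ (w0 + r) < r`, i.e. `γ < r / (w0 + r)`; clearing `π11` from this fraction gives the threshold. -/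

lemma lt_mul_one_sub_sub_add_iff (γ r w : ℝ) :
    γ < γ * (1 - r - w) + r ↔ γ * (w + r) < r := by
  constructor <;> intro h <;> linarith

lemma div_div_add_div_eq (a b w : ℝ) (hb : b ≠ 0) :
    a / b / (w + a / b) = a / (b * w + a) := by
  rw [add_div' _ _ _ hb, div_div_div_cancel_right₀ hb, mul_comm w b]

theorem stmt_6_general (γ w0 w1 π01 π11 : ℝ)
    (hw0 : 0 < w0)
    (hw1 : 0 < w1)
    (h01 : 0 < π01)
    (h11 : 0 < π11) :
    γ < γ * (1 - π01 * w1 / π11 - w0) + π01 * w1 / π11 ↔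
      π01 * w1 / (π11 * w0 + π01 * w1) > γ := by
  have hr : 0 < w0 + π01 * w1 / π11 := by positivity
  rw [lt_mul_one_sub_sub_add_iff, gt_iff_lt, ← div_div_add_div_eq _ _ _ h11.ne', lt_div_iff₀ hr]

theorem stmt_6 (γ w0 w1 π01 π11 : ℝ)
    (hγ : 0 < γ) (hγ1 : γ < 1)
    (hw0 : 0 < w0) (hw01 : w0 < 1)
    (hw1 : 0 < w1) (hw11 : w1 < 1)
    (h01 : 0 < π01) (h011 : π01 < 1)
    (h11 : 0 < π11) (h111 : π11 < 1)
    (hle : π01 ≤ π11) :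
    γ < γ * (1 - π01 * w1 / π11 - w0) + π01 * w1 / π11 ↔
      π01 * w1 / (π11 * w0 + π01 * w1) > γ :=
  stmt_6_general γ w0 w1 π01 π11 hw0 hw1 h01 h11
end

section
/- Let g: ℝ → ℝ be a strictly increasing concave bijection with g positive on positive arguments, and let γ, π00, π01, π10, π11 ∈ (0,1) with π00 ≤ π01 ≤ π11 and π00 ≤ π10 ≤ π11. Then W = (w00, w01, w10, w11) = (0, 1, 0, 1) is an optimal solution of: minimize (1-γ)(1-π00)g^{-1}(w00) + γ(1-π11)g^{-1}(w01) + (1-γ)π00·g^{-1}(w10) + γπ11·g^{-1}(w11) subject to (π10-1)w00 + (1-π11)w01 - π10·w10 + π11·w11 ≥ 1, (1-π00)w00 + (π01-1)w01 + π00·w10 - π01·w11 ≥ -1, and w ≥ 0; the optimal value is (1-γ)(1-π00)g^{-1}(0) + γ(1-π11)g^{-1}(1) + (1-γ)π00·g^{-1}(0) + γπ11·g^{-1}(1). -/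
/-! `f = g⁻¹` is monotone and convex (inverse of an increasing concave bijection). By Jensen and
monotonicity, `(1 - π00) f w00 + π00 f w10 ≥ f ((1 - π00) w00 + π00 w10) ≥ f 0`, and since the first
incentive constraint forces `(1 - π11) w01 + π11 w11 ≥ 1`, also `(1 - π11) f w01 + π11 f w11 ≥ f 1`.
Weighting these by `1 - γ` and `γ` bounds the objective below by its value at `(0, 1, 0, 1)`. -/

theorem StrictMono.invFun_eq_orderIsoOfSurjective_symm {α β : Type*} [LinearOrder α] [Preorder β]
    [Nonempty α] {f : α → β} (hf : StrictMono f) (hs : Function.Surjective f) :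
    Function.invFun f = (hf.orderIsoOfSurjective f hs).symm :=
  funext fun y => hf.injective <| by
    rw [Function.invFun_eq (hs y)]
    exact ((hf.orderIsoOfSurjective f hs).apply_symm_apply y).symm

theorem ConvexOn.apply_le_combo_of_le_of_monotone {f : ℝ → ℝ} (hf : ConvexOn ℝ Set.univ f)
    (hmono : Monotone f) {p x y c : ℝ} (hp₀ : 0 ≤ p) (hp₁ : p ≤ 1)
    (hc : c ≤ (1 - p) * x + p * y) :
    f c ≤ (1 - p) * f x + p * f y :=
  (hmono hc).trans <| hf.2 (Set.mem_univ x) (Set.mem_univ y) (sub_nonneg.2 hp₁) hp₀ (by ring)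

theorem stmt_8_general (g : ℝ → ℝ)
    (hmono : StrictMono g) (hconc : ConcaveOn ℝ Set.univ g)
    (hbij : Function.Bijective g)
    (γ π00 π01 π10 π11 : ℝ)
    (hγ : 0 < γ) (hγ1 : γ < 1)
    (h00 : 0 < π00) (h001 : π00 < 1)
    (h10 : 0 < π10) (h101 : π10 < 1)
    (h11 : 0 < π11) (h111 : π11 < 1) :
    let ginv := Function.invFun g
    let obj : ℝ → ℝ → ℝ → ℝ → ℝ := fun w00 w01 w10 w11 =>
      (1 - γ) * (1 - π00) * ginv w00 + γ * (1 - π11) * ginv w01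
        + (1 - γ) * π00 * ginv w10 + γ * π11 * ginv w11
    let feasible : ℝ → ℝ → ℝ → ℝ → Prop := fun w00 w01 w10 w11 =>
      0 ≤ w00 ∧ 0 ≤ w01 ∧ 0 ≤ w10 ∧ 0 ≤ w11 ∧
      (π10 - 1) * w00 + (1 - π11) * w01 - π10 * w10 + π11 * w11 ≥ 1 ∧
      (1 - π00) * w00 + (π01 - 1) * w01 + π00 * w10 - π01 * w11 ≥ -1
    feasible 0 1 0 1 ∧
    (∀ w00 w01 w10 w11 : ℝ, feasible w00 w01 w10 w11 →
      obj 0 1 0 1 ≤ obj w00 w01 w10 w11) ∧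
    obj 0 1 0 1 = (1 - γ) * (1 - π00) * ginv 0 + γ * (1 - π11) * ginv 1
        + (1 - γ) * π00 * ginv 0 + γ * π11 * ginv 1 := by
  intro ginv obj feasible
  have hginv : ginv = (hmono.orderIsoOfSurjective g hbij.2).symm :=
    hmono.invFun_eq_orderIsoOfSurjective_symm hbij.2
  have hginv_convex : ConvexOn ℝ Set.univ ginv := hginv ▸ OrderIso.convexOn_symm _ hconc
  have hginv_mono : Monotone ginv := hginv ▸ OrderIso.monotone _
  refine ⟨by norm_num [feasible], ?_, by ring⟩
  rintro w00 w01 w10 w11 ⟨hw00, -, hw10, -, hc, -⟩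
  have hlow : ginv 0 ≤ (1 - π00) * ginv w00 + π00 * ginv w10 :=
    hginv_convex.apply_le_combo_of_le_of_monotone hginv_mono h00.le h001.le <|
      add_nonneg (mul_nonneg (sub_nonneg.2 h001.le) hw00) (mul_nonneg h00.le hw10)
  have hhigh : ginv 1 ≤ (1 - π11) * ginv w01 + π11 * ginv w11 :=
    hginv_convex.apply_le_combo_of_le_of_monotone hginv_mono h11.le h111.le <| by
      linarith [mul_nonneg (sub_nonneg.2 h101.le) hw00, mul_nonneg h10.le hw10]
  linarith [mul_le_mul_of_nonneg_left hlow (sub_nonneg.2 hγ1.le),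
    mul_le_mul_of_nonneg_left hhigh hγ.le]

theorem stmt_8 (g : ℝ → ℝ)
    (hmono : StrictMono g) (hconc : ConcaveOn ℝ Set.univ g)
    (hbij : Function.Bijective g) (hpos : ∀ x : ℝ, 0 < x → 0 < g x)
    (γ π00 π01 π10 π11 : ℝ)
    (hγ : 0 < γ) (hγ1 : γ < 1)
    (h00 : 0 < π00) (h001 : π00 < 1)
    (h01 : 0 < π01) (h011 : π01 < 1)
    (h10 : 0 < π10) (h101 : π10 < 1)
    (h11 : 0 < π11) (h111 : π11 < 1)
    (ha1 : π00 ≤ π01) (ha2 : π01 ≤ π11) (ha3 : π00 ≤ π10) (ha4 : π10 ≤ π11) :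
    let ginv := Function.invFun g
    let obj : ℝ → ℝ → ℝ → ℝ → ℝ := fun w00 w01 w10 w11 =>
      (1 - γ) * (1 - π00) * ginv w00 + γ * (1 - π11) * ginv w01
        + (1 - γ) * π00 * ginv w10 + γ * π11 * ginv w11
    let feasible : ℝ → ℝ → ℝ → ℝ → Prop := fun w00 w01 w10 w11 =>
      0 ≤ w00 ∧ 0 ≤ w01 ∧ 0 ≤ w10 ∧ 0 ≤ w11 ∧
      (π10 - 1) * w00 + (1 - π11) * w01 - π10 * w10 + π11 * w11 ≥ 1 ∧
      (1 - π00) * w00 + (π01 - 1) * w01 + π00 * w10 - π01 * w11 ≥ -1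
    feasible 0 1 0 1 ∧
    (∀ w00 w01 w10 w11 : ℝ, feasible w00 w01 w10 w11 →
      obj 0 1 0 1 ≤ obj w00 w01 w10 w11) ∧
    obj 0 1 0 1 = (1 - γ) * (1 - π00) * ginv 0 + γ * (1 - π11) * ginv 1
        + (1 - γ) * π00 * ginv 0 + γ * π11 * ginv 1 :=
  stmt_8_general g hmono hconc hbij γ π00 π01 π10 π11 hγ hγ1 h00 h001 h10 h101 h11 h111
end

section
/- Let g(x) = √x on [0,∞) extended to a bijection (e.g., g(x) = x for x < 0). In the risk-averse agent model with this g, the optimal contract pays g^{-1}(0) = 0 for low expenditure and g^{-1}(1) = 1 for high expenditure, irrespective of outcome, and the optimal expected payment is γπ11·1 + γ(1-π11)·1 = γ (for parameters γ, π_{sj} ∈ (0,1) with π00 ≤ π01 ≤ π11 and π00 ≤ π10 ≤ π11). -/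
/-! On `[0, ∞)` the inverse of `g` is `w ↦ w ^ 2`. The first incentive constraint, with the
nonnegative terms in `w00` and `w10` dropped, forces the high-expenditure agent's expected utility
`(1 - π11) w01 + π11 w11` to be at least `1`. Since squaring is convex, the expected payment
`γ ((1 - π11) w01² + π11 w11²)` in the high-expenditure state is then at least `γ`, while the
low-expenditure payments only add nonnegative cost; `W = (0, 1, 0, 1)` attains this bound. -/

open Function

noncomputable def sqrtExt (x : ℝ) : ℝ := if x < 0 then x else √x

lemma sqrtExt_strictMono : StrictMono sqrtExt := by
  intro x y hxy
  unfold sqrtExt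
  by_cases hy : y < 0
  · rw [if_pos (hxy.trans hy), if_pos hy]
    exact hxy
  by_cases hx : x < 0
  · rw [if_pos hx, if_neg hy]
    exact hx.trans_le (Real.sqrt_nonneg y)
  · rw [if_neg hx, if_neg hy]
    exact Real.sqrt_lt_sqrt (not_lt.mp hx) hxy

lemma invFun_sqrtExt_of_nonneg {y : ℝ} (hy : 0 ≤ y) : invFun sqrtExt y = y ^ 2 := by
  have hsq : sqrtExt (y ^ 2) = y := by
    rw [sqrtExt, if_neg (not_lt.mpr (sq_nonneg y)), Real.sqrt_sq hy]
  have h := leftInverse_invFun sqrtExt_strictMono.injective (y ^ 2)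
  rwa [hsq] at h

lemma one_le_convex_comb_of_incentive {p q w00 w01 w10 w11 : ℝ} (hp0 : 0 ≤ p) (hp1 : p ≤ 1)
    (hw00 : 0 ≤ w00) (hw10 : 0 ≤ w10)
    (h : (p - 1) * w00 + (1 - q) * w01 - p * w10 + q * w11 ≥ 1) :
    1 ≤ (1 - q) * w01 + q * w11 := by
  nlinarith [mul_nonneg (sub_nonneg.mpr hp1) hw00, mul_nonneg hp0 hw10]

lemma one_le_convex_comb_sq {q a b : ℝ} (hq0 : 0 ≤ q) (hq1 : q ≤ 1)
    (h : 1 ≤ (1 - q) * a + q * b) : 1 ≤ (1 - q) * a ^ 2 + q * b ^ 2 :=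
  calc 1 ≤ ((1 - q) * a + q * b) ^ 2 := one_le_pow₀ h
    _ ≤ (1 - q) * a ^ 2 + q * b ^ 2 :=
      even_two.convexOn_pow.2 trivial trivial (sub_nonneg.mpr hq1) hq0 (sub_add_cancel 1 q)

theorem stmt_18_general (γ π00 π01 π10 π11 : ℝ)
    (hγ : 0 < γ) (hγ1 : γ < 1)
    (h00 : 0 < π00) (h001 : π00 < 1)
    (h10 : 0 < π10) (h101 : π10 < 1)
    (h11 : 0 < π11) (h111 : π11 < 1) :
    let g : ℝ → ℝ := fun x => if x < 0 then x else Real.sqrt x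
    let ginv := Function.invFun g
    let obj : ℝ → ℝ → ℝ → ℝ → ℝ := fun w00 w01 w10 w11 =>
      (1 - γ) * (1 - π00) * ginv w00 + γ * (1 - π11) * ginv w01
        + (1 - γ) * π00 * ginv w10 + γ * π11 * ginv w11
    let feasible : ℝ → ℝ → ℝ → ℝ → Prop := fun w00 w01 w10 w11 =>
      0 ≤ w00 ∧ 0 ≤ w01 ∧ 0 ≤ w10 ∧ 0 ≤ w11 ∧
      (π10 - 1) * w00 + (1 - π11) * w01 - π10 * w10 + π11 * w11 ≥ 1 ∧
      (1 - π00) * w00 + (π01 - 1) * w01 + π00 * w10 - π01 * w11 ≥ -1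
    ginv 0 = 0 ∧ ginv 1 = 1 ∧
    feasible 0 1 0 1 ∧
    (∀ w00 w01 w10 w11 : ℝ, feasible w00 w01 w10 w11 →
      obj 0 1 0 1 ≤ obj w00 w01 w10 w11) ∧
    obj 0 1 0 1 = γ * π11 * 1 + γ * (1 - π11) * 1 ∧
    γ * π11 * 1 + γ * (1 - π11) * 1 = γ := by
  intro g ginv obj feasible
  have hginv : ∀ y, 0 ≤ y → ginv y = y ^ 2 := fun _ hy => invFun_sqrtExt_of_nonneg hy
  have h0 : ginv 0 = 0 := by simpa using hginv 0 le_rfl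
  have h1 : ginv 1 = 1 := by simpa using hginv 1 zero_le_one
  refine ⟨h0, h1, ⟨le_rfl, zero_le_one, le_rfl, zero_le_one, by linarith, by linarith⟩, ?_,
    by simp only [obj, h0, h1]; ring, by ring⟩
  rintro w00 w01 w10 w11 ⟨hw00, hw01, hw10, hw11, hIC, -⟩
  have hhigh : 1 ≤ (1 - π11) * w01 ^ 2 + π11 * w11 ^ 2 :=
    one_le_convex_comb_sq h11.le h111.le
      (one_le_convex_comb_of_incentive h10.le h101.le hw00 hw10 hIC)
  simp only [obj, h0, h1, hginv w00 hw00, hginv w01 hw01, hginv w10 hw10, hginv w11 hw11]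
  nlinarith [mul_le_mul_of_nonneg_left hhigh hγ.le,
    mul_nonneg (mul_nonneg (sub_nonneg.mpr hγ1.le) (sub_nonneg.mpr h001.le)) (sq_nonneg w00),
    mul_nonneg (mul_nonneg (sub_nonneg.mpr hγ1.le) h00.le) (sq_nonneg w10)]

theorem stmt_18 (γ π00 π01 π10 π11 : ℝ)
    (hγ : 0 < γ) (hγ1 : γ < 1)
    (h00 : 0 < π00) (h001 : π00 < 1)
    (h01 : 0 < π01) (h011 : π01 < 1)
    (h10 : 0 < π10) (h101 : π10 < 1)
    (h11 : 0 < π11) (h111 : π11 < 1)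
    (ha1 : π00 ≤ π01) (ha2 : π01 ≤ π11) (ha3 : π00 ≤ π10) (ha4 : π10 ≤ π11) :
    let g : ℝ → ℝ := fun x => if x < 0 then x else Real.sqrt x
    let ginv := Function.invFun g
    let obj : ℝ → ℝ → ℝ → ℝ → ℝ := fun w00 w01 w10 w11 =>
      (1 - γ) * (1 - π00) * ginv w00 + γ * (1 - π11) * ginv w01
        + (1 - γ) * π00 * ginv w10 + γ * π11 * ginv w11
    let feasible : ℝ → ℝ → ℝ → ℝ → Prop := fun w00 w01 w10 w11 =>
      0 ≤ w00 ∧ 0 ≤ w01 ∧ 0 ≤ w10 ∧ 0 ≤ w11 ∧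
      (π10 - 1) * w00 + (1 - π11) * w01 - π10 * w10 + π11 * w11 ≥ 1 ∧
      (1 - π00) * w00 + (π01 - 1) * w01 + π00 * w10 - π01 * w11 ≥ -1
    ginv 0 = 0 ∧ ginv 1 = 1 ∧
    feasible 0 1 0 1 ∧
    (∀ w00 w01 w10 w11 : ℝ, feasible w00 w01 w10 w11 →
      obj 0 1 0 1 ≤ obj w00 w01 w10 w11) ∧
    obj 0 1 0 1 = γ * π11 * 1 + γ * (1 - π11) * 1 ∧
    γ * π11 * 1 + γ * (1 - π11) * 1 = γ :=
  stmt_18_general γ π00 π01 π10 π11 hγ hγ1 h00 h001 h10 h101 h11 h111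
end
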